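/- arXiv:1110.6473 — 2 statements merged into one kernel-verified Lean document; each statement's English description precedes it below -/
import Mathlib

section
/- If a combinatorial triangulation contains k pairwise edge-disjoint separating triangles, then any sequence of edge flips that transforms it into a 4-connected triangulation has length at least k, since each flip removes only the separating triangles to which the flipped edge belongs. -/
/-- A combinatorial triangulation (maximal planar simple graph with an embedding),
represented by its collection of triangular faces together with a designated outer
face.  Every face is a 3-set of vertices, every edge (2-subset of a face) lies on
exactly two faces, every vertex lies on a face, Euler's relation `F = 2n - 4`
holds, and the faces connect the vertex set. -/
structure Triangulation (V : Type*) [Fintype V] [DecidableEq V] where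
  faces : Finset (Finset V)
  outer : Finset V
  outer_mem : outer ∈ faces
  card_eq : ∀ f ∈ faces, f.card = 3
  two_faces : ∀ e : Finset V, e.card = 2 → (∃ f ∈ faces, e ⊆ f) →
      (faces.filter fun f => e ⊆ f).card = 2
  covers : ∀ v : V, ∃ f ∈ faces, v ∈ f
  euler : faces.card = 2 * Fintype.card V - 4
  face_connected : ∀ A : Finset V, A.Nonempty → A ≠ Finset.univ →
      ∃ f ∈ faces, (∃ a ∈ f, a ∈ A) ∧ ∃ b ∈ f, b ∉ A

namespace Triangulation

variable {V : Type*} [Fintype V] [DecidableEq V]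

/-- The underlying simple graph of a triangulation: two distinct vertices are
adjacent when they lie on a common (triangular) face. -/
def graph (T : Triangulation V) : SimpleGraph V where
  Adj u v := u ≠ v ∧ ∃ f ∈ T.faces, u ∈ f ∧ v ∈ f
  symm := by
    constructor
    rintro u v ⟨huv, f, hf, hu, hv⟩
    exact ⟨huv.symm, f, hf, hv, hu⟩
  loopless := by constructor; rintro v ⟨h, -⟩; exact h rfl

instance (T : Triangulation V) : DecidableRel T.graph.Adj := fun u v =>
  inferInstanceAs (Decidable (u ≠ v ∧ ∃ f ∈ T.faces, u ∈ f ∧ v ∈ f))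

/-- `e` is an edge of the triangulation: a 2-subset of some face. -/
def IsEdge (T : Triangulation V) (e : Finset V) : Prop :=
  e.card = 2 ∧ ∃ f ∈ T.faces, e ⊆ f

/-- A separating triangle: a 3-cycle whose removal splits the remaining vertices
into two non-empty parts with no edge between them. -/
def IsSepTri (T : Triangulation V) (t : Finset V) : Prop :=
  t.card = 3 ∧ (∀ u ∈ t, ∀ v ∈ t, u ≠ v → T.graph.Adj u v) ∧
  ∃ A B : Set V, A.Nonempty ∧ B.Nonempty ∧ A ∪ B = {v : V | v ∉ t} ∧
    A ∩ B = ∅ ∧ ∀ a ∈ A, ∀ b ∈ B, ¬ T.graph.Adj a b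

/-- `v` lies outside the separating triangle `t`: avoiding `t`, it can reach a
vertex of the outer face. -/
def IsOutside (T : Triangulation V) (t : Finset V) (v : V) : Prop :=
  ∃ (hv : v ∉ t) (w : V) (hw : w ∉ t), w ∈ T.outer ∧
    (T.graph.induce {x : V | x ∉ t}).Reachable ⟨v, hv⟩ ⟨w, hw⟩

/-- `v` lies inside the separating triangle `t`. -/
def IsInside (T : Triangulation V) (t : Finset V) (v : V) : Prop :=
  v ∉ t ∧ ¬ T.IsOutside t v

/-- Separating triangle `A` contains separating triangle `B`: the interior of `B`
is contained in the interior of `A`, with strictly smaller vertex set. -/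
def Contains (T : Triangulation V) (A B : Finset V) : Prop :=
  (∀ v, T.IsInside B v → T.IsInside A v) ∧ ∃ v, T.IsInside A v ∧ ¬ T.IsInside B v

/-- A free edge: an edge belonging to no separating triangle. -/
def FreeEdge (T : Triangulation V) (e : Finset V) : Prop :=
  T.IsEdge e ∧ ∀ t, T.IsSepTri t → ¬ e ⊆ t

/-- An edge is inside a separating triangle if at least one endpoint is inside. -/
def EdgeInsideOf (T : Triangulation V) (t e : Finset V) : Prop :=
  ∃ v ∈ e, T.IsInside t v

/-- A triangulation is 4-connected iff it has no separating triangle. -/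
def FourConnected (T : Triangulation V) : Prop := ∀ t, ¬ T.IsSepTri t

/-- The data of an edge flip: the edge `{a,b}`, lying on faces `{a,b,c}` and
`{a,b,d}`, is replaced by the edge `{c,d}` (allowed only if `{c,d}` is not
already an edge); the outer face is kept, unless it was one of the two modified
faces, in which case one of the two new faces is the new outer face. -/
def FlipData (T T' : Triangulation V) (a b c d : V) : Prop :=
  ({a, b, c} : Finset V) ∈ T.faces ∧ ({a, b, d} : Finset V) ∈ T.faces ∧
  c ≠ d ∧ ¬ T.graph.Adj c d ∧
  T'.faces = insert {a, c, d} (insert {b, c, d}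
      (T.faces \ {({a, b, c} : Finset V), ({a, b, d} : Finset V)})) ∧
  (T.outer ≠ {a, b, c} ∧ T.outer ≠ {a, b, d} → T'.outer = T.outer) ∧
  (T.outer = {a, b, c} ∨ T.outer = {a, b, d} →
      T'.outer = ({a, c, d} : Finset V) ∨ T'.outer = ({b, c, d} : Finset V))

/-- `T'` is obtained from `T` by a single edge flip. -/
def IsFlip (T T' : Triangulation V) : Prop := ∃ a b c d, FlipData T T' a b c d

/-- `T'` is obtained from `T` by flipping the edge `e`. -/
def FlipsEdge (T T' : Triangulation V) (e : Finset V) : Prop :=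
  ∃ a b c d, e = {a, b} ∧ FlipData T T' a b c d

/-- `T'` is obtained from `T` by a flip that creates the new edge `e`. -/
def FlipCreates (T T' : Triangulation V) (e : Finset V) : Prop :=
  ∃ a b c d, e = {c, d} ∧ FlipData T T' a b c d

/-- `FlipSeq k T T'` : `T'` is obtained from `T` by a sequence of `k` flips. -/
def FlipSeq : ℕ → Triangulation V → Triangulation V → Prop
  | 0, T, T' => T' = T
  | n + 1, T, T' => ∃ T'', IsFlip T T'' ∧ FlipSeq n T'' T'

/-- The canonical triangulation: one having two (distinct) dominant vertices. -/
def IsCanonical (T : Triangulation V) : Prop :=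
  ∃ x y : V, x ≠ y ∧ (∀ v, v ≠ x → T.graph.Adj x v) ∧ ∀ v, v ≠ y → T.graph.Adj y v

/-- Isomorphism of triangulations: a vertex bijection carrying faces to faces. -/
def Iso (T1 T2 : Triangulation V) : Prop :=
  ∃ e : V ≃ V, ∀ f : Finset V, f ∈ T1.faces ↔ f.image ⇑e ∈ T2.faces

end Triangulation

/-!
Flipping `ab` (with faces `abc`, `abd`) into `cd` changes the graph only by deleting `ab`
and adding `cd`. A separating triangle `t` with `ab ⊄ t` therefore survives the flip: its
edges are kept, and the new edge `cd` cannot cross the partition of the vertices off `t`,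
because its endpoints have the common neighbours `a` and `b`, which would then both have to
lie on `t`. So by edge-disjointness each flip destroys at most one triangle of the family,
while the 4-connected target contains none.
-/

lemma Finset.ne_of_card_eq_three {α : Type*} [DecidableEq α] {a b c : α}
    (h : ({a, b, c} : Finset α).card = 3) : a ≠ b ∧ a ≠ c ∧ b ≠ c := by
  grind [Finset.card_insert_le, Finset.card_singleton]

namespace Triangulation

variable {V : Type*} [Fintype V] [DecidableEq V]

namespace FlipData

variable {T T' : Triangulation V} {a b c d u v : V}

lemma mem_faces (h : FlipData T T' a b c d) {f : Finset V} :
    f ∈ T'.faces ↔ (f ∈ T.faces ∧ f ≠ {a, b, c} ∧ f ≠ {a, b, d}) ∨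
      f = {a, c, d} ∨ f = {b, c, d} := by
  rw [h.2.2.2.2.1]
  simp only [Finset.mem_insert, Finset.mem_sdiff, Finset.mem_singleton, not_or]
  tauto

lemma adj_of_mem_left_of_mem_right (h : FlipData T T' a b c d)
    (hu : u = a ∨ u = b) (hv : v = c ∨ v = d) : T.graph.Adj u v := by
  obtain ⟨habc, habd, -⟩ := h
  have := Finset.ne_of_card_eq_three (T.card_eq _ habc)
  have := Finset.ne_of_card_eq_three (T.card_eq _ habd)
  rcases hv with rfl | rfl
  · exact ⟨by grind, _, habc, by grind, by simp⟩
  · exact ⟨by grind, _, habd, by grind, by simp⟩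

lemma adj_of_adj (h : FlipData T T' a b c d) (huv : T.graph.Adj u v)
    (hne : s(u, v) ≠ s(a, b)) : T'.graph.Adj u v := by
  obtain ⟨hne_uv, f, hf, hu, hv⟩ := huv
  refine ⟨hne_uv, ?_⟩
  by_cases hold : f ≠ {a, b, c} ∧ f ≠ {a, b, d}
  · exact ⟨f, h.mem_faces.mpr (Or.inl ⟨hf, hold⟩), hu, hv⟩
  have hacd : ({a, c, d} : Finset V) ∈ T'.faces := h.mem_faces.mpr (Or.inr (Or.inl rfl))
  have hbcd : ({b, c, d} : Finset V) ∈ T'.faces := h.mem_faces.mpr (Or.inr (Or.inr rfl))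
  suffices (u ∈ ({a, c, d} : Finset V) ∧ v ∈ ({a, c, d} : Finset V)) ∨
      (u ∈ ({b, c, d} : Finset V) ∧ v ∈ ({b, c, d} : Finset V)) by
    rcases this with ⟨hu', hv'⟩ | ⟨hu', hv'⟩
    exacts [⟨_, hacd, hu', hv'⟩, ⟨_, hbcd, hu', hv'⟩]
  rw [not_and_or, not_not, not_not] at hold
  rcases hold with rfl | rfl <;>
    simp only [Finset.mem_insert, Finset.mem_singleton, ne_eq, Sym2.eq_iff] at hu hv hne ⊢ <;>
    grind

lemma adj_or_eq_of_adj (h : FlipData T T' a b c d) (huv : T'.graph.Adj u v) :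
    T.graph.Adj u v ∨ s(u, v) = s(c, d) := by
  obtain ⟨hne_uv, f, hf, hu, hv⟩ := huv
  have hac := h.adj_of_mem_left_of_mem_right (.inl rfl) (.inl rfl)
  have had := h.adj_of_mem_left_of_mem_right (.inl rfl) (.inr rfl)
  have hbc := h.adj_of_mem_left_of_mem_right (.inr rfl) (.inl rfl)
  have hbd := h.adj_of_mem_left_of_mem_right (.inr rfl) (.inr rfl)
  rcases h.mem_faces.mp hf with ⟨hf, -⟩ | rfl | rfl
  · exact Or.inl ⟨hne_uv, f, hf, hu, hv⟩
  all_goals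
    simp only [Finset.mem_insert, Finset.mem_singleton] at hu hv
    rcases hu with rfl | rfl | rfl <;> rcases hv with rfl | rfl | rfl <;>
      simp_all [SimpleGraph.adj_comm]

end FlipData

lemma IsSepTri.of_flipData {T T' : Triangulation V} {a b c d : V} {t : Finset V}
    (h : FlipData T T' a b c d) (ht : T.IsSepTri t) (hab : ¬ {a, b} ⊆ t) :
    T'.IsSepTri t := by
  obtain ⟨ht3, htri, A, B, hA, hB, hAB, hABdisj, hsep⟩ := ht
  have hcommon : ∀ {x y : V}, x ∈ A → y ∈ B → ∀ w, T.graph.Adj w x → T.graph.Adj w y →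
      w ∈ t := by
    intro x y hx hy w hwx hwy
    by_contra hw
    have : w ∈ A ∪ B := hAB ▸ hw
    rcases this with hwA | hwB
    · exact hsep w hwA y hy hwy
    · exact hsep x hx w hwB hwx.symm
  have hcd : ∀ {w z : V}, w = a ∨ w = b → z = c ∨ z = d → T.graph.Adj w z :=
    h.adj_of_mem_left_of_mem_right
  refine ⟨ht3, fun u hu v hv huv => h.adj_of_adj (htri u hu v hv huv) ?_,
    A, B, hA, hB, hAB, hABdisj, fun x hx y hy hxy => ?_⟩
  · rintro huv_ab
    rcases Sym2.eq_iff.mp huv_ab with ⟨rfl, rfl⟩ | ⟨rfl, rfl⟩ <;>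
      exact hab (Finset.insert_subset_iff.mpr ⟨by assumption, by simpa⟩)
  rcases h.adj_or_eq_of_adj hxy with hxy | hxy
  · exact hsep x hx y hy hxy
  have hab_mem : ∀ w, w = a ∨ w = b → w ∈ t := by
    intro w hw
    rcases Sym2.eq_iff.mp hxy with ⟨rfl, rfl⟩ | ⟨rfl, rfl⟩
    · exact hcommon hx hy w (hcd hw (.inl rfl)) (hcd hw (.inr rfl))
    · exact hcommon hx hy w (hcd hw (.inr rfl)) (hcd hw (.inl rfl))
  exact hab (Finset.insert_subset_iff.mpr
    ⟨hab_mem a (.inl rfl), Finset.singleton_subset_iff.mpr (hab_mem b (.inr rfl))⟩)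

end Triangulation

lemma Finset.card_le_card_filter_not_subset_add_one {V : Type*} [DecidableEq V]
    {S : Finset (Finset V)}
    (hdisj : ∀ t1 ∈ S, ∀ t2 ∈ S, t1 ≠ t2 → ∀ e : Finset V, e.card = 2 → e ⊆ t1 → ¬ e ⊆ t2)
    {e : Finset V} (he : e.card = 2) :
    S.card ≤ (S.filter fun t => ¬ e ⊆ t).card + 1 := by
  have hone : (S.filter fun t => e ⊆ t).card ≤ 1 := by
    refine Finset.card_le_one.mpr fun t1 ht1 t2 ht2 => ?_
    rw [Finset.mem_filter] at ht1 ht2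
    by_contra hne
    exact hdisj t1 ht1.1 t2 ht2.1 hne e he ht1.2 ht2.2
  have := Finset.card_filter_add_card_filter_not (s := S) (fun t => e ⊆ t)
  omega

/-- If a triangulation contains `k` pairwise edge-disjoint separating
triangles, then any sequence of edge flips transforming it into a 4-connected
triangulation has length at least `k`. -/
theorem edge_disjoint_sepTris_lower_bound
    {V : Type*} [Fintype V] [DecidableEq V] (T : Triangulation V)
    (S : Finset (Finset V)) (hS : ∀ t ∈ S, T.IsSepTri t)
    (hdisj : ∀ t1 ∈ S, ∀ t2 ∈ S, t1 ≠ t2 →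
      ∀ e : Finset V, e.card = 2 → e ⊆ t1 → ¬ e ⊆ t2)
    (k : ℕ) (T' : Triangulation V) (hseq : Triangulation.FlipSeq k T T')
    (h4 : T'.FourConnected) :
    S.card ≤ k := by
  induction k generalizing T S with
  | zero =>
    obtain rfl : T' = T := hseq
    exact (Finset.card_eq_zero.mpr (Finset.eq_empty_of_forall_notMem fun t ht =>
      h4 t (hS t ht))).le
  | succ n ih =>
    obtain ⟨T'', ⟨a, b, c, d, hflip⟩, hseq⟩ := hseq
    have hab : ({a, b} : Finset V).card = 2 :=
      Finset.card_pair (Finset.ne_of_card_eq_three (T.card_eq _ hflip.1)).1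
    have hkept := ih T'' (S.filter fun t => ¬ {a, b} ⊆ t)
      (fun t ht => (hS t (Finset.mem_filter.mp ht).1).of_flipData hflip
        (Finset.mem_filter.mp ht).2)
      (fun t1 ht1 t2 ht2 => hdisj t1 (Finset.mem_of_mem_filter _ ht1) t2
        (Finset.mem_of_mem_filter _ ht2)) hseq
    have := Finset.card_le_card_filter_not_subset_add_one hdisj hab
    omega
end

section
/- In a 4-connected combinatorial triangulation on n ≥ 13 vertices, every vertex of degree at least 6 either has a neighbour of degree at least 6, or there is a single edge flip after which it is adjacent to a vertex that had degree at least 5 before the flip. -/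
/-!
Every vertex has degree at least 4: a vertex of degree 3 would be enclosed by the triangle
of its neighbours, which would then be separating. Suppose no neighbour of `v` has degree at
least 6, so that all of them have degree 4 or 5.

If `v` has a neighbour `w` of degree 5, it suffices to flip any flippable edge other than `vw`.
If there were none, a local analysis of the links of the neighbours of `v` shows that every
neighbour of `v` other than `w` has degree 4 and is adjacent to `w`, whence
`deg w ≥ deg v ≥ 6`.

If all neighbours of `v` have degree 4, pick one, `u`, with link `v p y q`. Then `v` and `y`
are not adjacent and `y` has degree at least 5, so flipping `up` makes `y` a neighbour of `v`.

The contradictions along the way have two sources. The link of a vertex is a union of cycles,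
so a vertex of degree 4 or 5 cannot have a triangle, nor one of degree 5 a quadrilateral, as a
proper part of its link. And a set of at most three vertices whose neighbourhoods lie in the
set together with a triangle makes that triangle separating.
-/

theorem Finset.card_filter_insert_insert_sdiff_add {α : Type*} [DecidableEq α]
    {F R : Finset α} {x y : α} (hR : R ⊆ F) (hx : x ∉ F) (hy : y ∉ F) (hxy : x ≠ y)
    (P : α → Prop) [DecidablePred P] :
    ((insert x (insert y (F \ R))).filter P).card + (R.filter P).card =
      (F.filter P).card + (({x, y} : Finset α).filter P).card := by
  simp only [Finset.card_filter]
  rw [Finset.sum_insert (by simp [hx, hxy]), Finset.sum_insert (by simp [hy]),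
    Finset.sum_pair hxy, ← Finset.sum_sdiff hR]
  ring

theorem Finset.card_filter_flip_eq {α : Type*} [DecidableEq α] {a b c d : α} (hab : a ≠ b)
    (hcd : c ≠ d) {e : Finset α} (he : e.card = 2) (habe : ¬ (a ∈ e ∧ b ∈ e))
    (hcde : ¬ (c ∈ e ∧ d ∈ e)) :
    (({{a, b, c}, {a, b, d}} : Finset (Finset α)).filter fun f => e ⊆ f).card =
      (({{a, c, d}, {b, c, d}} : Finset (Finset α)).filter fun f => e ⊆ f).card := by
  obtain ⟨s, t, hst, rfl⟩ := Finset.card_eq_two.1 he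
  simp only [Finset.filter_insert, Finset.filter_singleton, Finset.insert_subset_iff,
    Finset.singleton_subset_iff, Finset.mem_insert, Finset.mem_singleton] at *
  split_ifs <;> grind

namespace Triangulation

variable {V : Type*} [Fintype V] [DecidableEq V] (T : Triangulation V)

lemma mem_faces_perm {a b c a' b' c' : V} (h : ({a, b, c} : Finset V) ∈ T.faces)
    (hperm : ({a', b', c'} : Finset V) = {a, b, c} := by
      ext; simp only [Finset.mem_insert, Finset.mem_singleton]; tauto) :
    ({a', b', c'} : Finset V) ∈ T.faces :=
  hperm ▸ h

lemma ne_of_mem_faces {a b c : V} (h : ({a, b, c} : Finset V) ∈ T.faces) :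
    a ≠ b ∧ a ≠ c ∧ b ≠ c := by
  have h3 := T.card_eq _ h
  refine ⟨?_, ?_, ?_⟩ <;> rintro rfl <;> grind [Finset.card_le_two]

lemma adj_of_mem_faces {a b c : V} (h : ({a, b, c} : Finset V) ∈ T.faces) :
    T.graph.Adj a b ∧ T.graph.Adj a c ∧ T.graph.Adj b c :=
  have ⟨hab, hac, hbc⟩ := T.ne_of_mem_faces h
  ⟨⟨hab, _, h, by simp, by simp⟩, ⟨hac, _, h, by simp, by simp⟩,
    ⟨hbc, _, h, by simp, by simp⟩⟩

lemma exists_eq_of_mem_faces {f : Finset V} (hf : f ∈ T.faces) {x y : V} (hx : x ∈ f)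
    (hy : y ∈ f) (hxy : x ≠ y) : ∃ z, f = {x, y, z} := by
  have hy' : y ∈ f.erase x := Finset.mem_erase.2 ⟨hxy.symm, hy⟩
  obtain ⟨z, hz⟩ := Finset.card_eq_one.1 (show ((f.erase x).erase y).card = 1 by
    rw [Finset.card_erase_of_mem hy', Finset.card_erase_of_mem hx, T.card_eq f hf])
  exact ⟨z, by rw [← hz, Finset.insert_erase hy', Finset.insert_erase hx]⟩

lemma exists_mem_faces_of_adj {x y : V} (h : T.graph.Adj x y) :
    ∃ z, ({x, y, z} : Finset V) ∈ T.faces := by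
  obtain ⟨hxy, f, hf, hx, hy⟩ := h
  obtain ⟨z, rfl⟩ := T.exists_eq_of_mem_faces hf hx hy hxy
  exact ⟨z, hf⟩

lemma card_filter_pair_subset {x y z : V} (h : ({x, y, z} : Finset V) ∈ T.faces) :
    (T.faces.filter fun f => {x, y} ⊆ f).card = 2 :=
  T.two_faces _ (Finset.card_pair (T.ne_of_mem_faces h).1)
    ⟨_, h, by simp [Finset.insert_subset_iff]⟩

lemma eq_or_eq_of_mem_faces {x y p q t : V} (hp : ({x, y, p} : Finset V) ∈ T.faces)
    (hq : ({x, y, q} : Finset V) ∈ T.faces) (hpq : p ≠ q)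
    (ht : ({x, y, t} : Finset V) ∈ T.faces) : t = p ∨ t = q := by
  by_contra! htpq
  have hmem : ∀ r, ({x, y, r} : Finset V) ∈ T.faces →
      ({x, y, r} : Finset V) ∈ T.faces.filter fun f => {x, y} ⊆ f :=
    fun r hr => Finset.mem_filter.2 ⟨hr, by simp [Finset.insert_subset_iff]⟩
  have hne : ∀ r s, ({x, y, r} : Finset V) ∈ T.faces → r ≠ s →
      ({x, y, r} : Finset V) ≠ {x, y, s} := fun r s hr hrs =>
    have ⟨_, hxr, hyr⟩ := T.ne_of_mem_faces hr
    ne_of_mem_of_not_mem' (a := r) (by simp) (by simp [hxr.symm, hyr.symm, hrs])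
  have := Finset.two_lt_card.2 ⟨_, hmem p hp, _, hmem q hq, _, hmem t ht,
    hne p q hp hpq, hne p t hp (Ne.symm htpq.1), hne q t hq (Ne.symm htpq.2)⟩
  have := T.card_filter_pair_subset hp
  omega

lemma exists_ne_mem_faces {x y z : V} (h : ({x, y, z} : Finset V) ∈ T.faces) :
    ∃ z', z' ≠ z ∧ ({x, y, z'} : Finset V) ∈ T.faces := by
  obtain ⟨g, hg, hgz⟩ := Finset.exists_mem_ne
    (show 1 < (T.faces.filter fun f => {x, y} ⊆ f).card by rw [T.card_filter_pair_subset h]; simp)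
    ({x, y, z} : Finset V)
  rw [Finset.mem_filter, Finset.insert_subset_iff, Finset.singleton_subset_iff] at hg
  obtain ⟨z', rfl⟩ := T.exists_eq_of_mem_faces hg.1 hg.2.1 hg.2.2 (T.ne_of_mem_faces h).1
  exact ⟨z', by rintro rfl; exact hgz rfl, hg.1⟩

lemma neighborFinset_eq_of_subset {x : V} {s : Finset V} (hs : s ⊆ T.graph.neighborFinset x)
    (hcard : T.graph.degree x ≤ s.card) : T.graph.neighborFinset x = s :=
  (Finset.eq_of_subset_of_card_le hs (by rwa [SimpleGraph.card_neighborFinset_eq_degree])).symm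

/-- If the faces at `u` through the vertices of `S` only reach vertices of `S`, then the link of
`u` outside `S` is a union of cycles, hence has at least three vertices if it is nonempty. -/
lemma card_add_three_le_degree {u : V} {S : Finset V}
    (hS : ∀ s ∈ S, ∃ p ∈ S, ∃ q ∈ S, p ≠ q ∧ ({u, s, p} : Finset V) ∈ T.faces ∧
      ({u, s, q} : Finset V) ∈ T.faces)
    (hlt : S.card < T.graph.degree u) : S.card + 3 ≤ T.graph.degree u := by
  have hclosed : ∀ s ∈ S, ∀ t, ({u, s, t} : Finset V) ∈ T.faces → t ∈ S := by
    intro s hs t ht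
    obtain ⟨p, hp, q, hq, hpq, hfp, hfq⟩ := hS s hs
    rcases T.eq_or_eq_of_mem_faces hfp hfq hpq ht with rfl | rfl <;> assumption
  have hSN : S ⊆ T.graph.neighborFinset u := fun s hs => by
    obtain ⟨p, -, -, -, -, hp, -⟩ := hS s hs
    exact (SimpleGraph.mem_neighborFinset ..).2 (T.adj_of_mem_faces hp).1
  obtain ⟨z, hzN, hzS⟩ := Finset.exists_mem_notMem_of_card_lt_card
    (show S.card < (T.graph.neighborFinset u).card by
      rwa [SimpleGraph.card_neighborFinset_eq_degree])
  obtain ⟨t₁, ht₁⟩ := T.exists_mem_faces_of_adj ((SimpleGraph.mem_neighborFinset ..).1 hzN)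
  obtain ⟨t₂, ht₂₁, ht₂⟩ := T.exists_ne_mem_faces ht₁
  have hout : ∀ t, ({u, z, t} : Finset V) ∈ T.faces → t ∉ S := fun t ht htS =>
    hzS (hclosed t htS z (T.mem_faces_perm ht))
  obtain ⟨-, -, hzt₁⟩ := T.ne_of_mem_faces ht₁
  obtain ⟨-, -, hzt₂⟩ := T.ne_of_mem_faces ht₂
  have hsub : insert z (insert t₁ (insert t₂ S)) ⊆ T.graph.neighborFinset u := by
    simp only [Finset.insert_subset_iff, SimpleGraph.mem_neighborFinset]
    exact ⟨(T.adj_of_mem_faces ht₁).1, (T.adj_of_mem_faces ht₁).2.1,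
      (T.adj_of_mem_faces ht₂).2.1, hSN⟩
  calc S.card + 3 = (insert z (insert t₁ (insert t₂ S))).card := by
        rw [Finset.card_insert_of_notMem (by simp [hzt₁, hzt₂, hzS]),
          Finset.card_insert_of_notMem (by simp [ht₂₁.symm, hout t₁ ht₁]),
          Finset.card_insert_of_notMem (hout t₂ ht₂)]
    _ ≤ T.graph.degree u := by
        rw [← SimpleGraph.card_neighborFinset_eq_degree]; exact Finset.card_le_card hsub

lemma six_le_degree_of_link_triangle {u x p q : V} (hxp : ({u, x, p} : Finset V) ∈ T.faces)
    (hpq : ({u, p, q} : Finset V) ∈ T.faces) (hqx : ({u, q, x} : Finset V) ∈ T.faces)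
    (hlt : 3 < T.graph.degree u) : 6 ≤ T.graph.degree u := by
  obtain ⟨-, -, hxp'⟩ := T.ne_of_mem_faces hxp
  obtain ⟨-, -, hpq'⟩ := T.ne_of_mem_faces hpq
  obtain ⟨-, -, hqx'⟩ := T.ne_of_mem_faces hqx
  have hcard : ({x, p, q} : Finset V).card = 3 :=
    Finset.card_eq_three.2 ⟨x, p, q, hxp', hqx'.symm, hpq', rfl⟩
  have := T.card_add_three_le_degree (u := u) (S := {x, p, q}) ?_ (by omega)
  · omega
  intro s hs
  simp only [Finset.mem_insert, Finset.mem_singleton] at hs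
  rcases hs with rfl | rfl | rfl
  exacts [⟨p, by simp, q, by simp, hpq', hxp, T.mem_faces_perm hqx⟩,
    ⟨x, by simp, q, by simp, hqx'.symm, T.mem_faces_perm hxp, hpq⟩,
    ⟨x, by simp, p, by simp, hxp', hqx, T.mem_faces_perm hpq⟩]

lemma seven_le_degree_of_link_square {u a b c d : V} (hab : ({u, a, b} : Finset V) ∈ T.faces)
    (hbc : ({u, b, c} : Finset V) ∈ T.faces) (hcd : ({u, c, d} : Finset V) ∈ T.faces)
    (hda : ({u, d, a} : Finset V) ∈ T.faces) (hac : a ≠ c) (hbd : b ≠ d)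
    (hlt : 4 < T.graph.degree u) : 7 ≤ T.graph.degree u := by
  obtain ⟨-, -, hab'⟩ := T.ne_of_mem_faces hab
  obtain ⟨-, -, hbc'⟩ := T.ne_of_mem_faces hbc
  obtain ⟨-, -, hcd'⟩ := T.ne_of_mem_faces hcd
  obtain ⟨-, -, hda'⟩ := T.ne_of_mem_faces hda
  have hcard : ({a, b, c, d} : Finset V).card = 4 := by grind
  have := T.card_add_three_le_degree (u := u) (S := {a, b, c, d}) ?_ (by omega)
  · omega
  intro s hs
  simp only [Finset.mem_insert, Finset.mem_singleton] at hs
  rcases hs with rfl | rfl | rfl | rfl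
  exacts [⟨b, by simp, d, by simp, hbd, hab, T.mem_faces_perm hda⟩,
    ⟨a, by simp, c, by simp, hac, T.mem_faces_perm hab, hbc⟩,
    ⟨b, by simp, d, by simp, hbd, T.mem_faces_perm hbc, hcd⟩,
    ⟨c, by simp, a, by simp, hac.symm, T.mem_faces_perm hcd, hda⟩]

lemma link_four {u x p q : V} (hdeg : T.graph.degree u = 4)
    (hp : ({u, x, p} : Finset V) ∈ T.faces) (hq : ({u, x, q} : Finset V) ∈ T.faces)
    (hpq : p ≠ q) :
    ∃ y, y ≠ x ∧ T.graph.neighborFinset u = {x, p, q, y} ∧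
      ({u, p, y} : Finset V) ∈ T.faces ∧ ({u, q, y} : Finset V) ∈ T.faces := by
  have no_triangle : ({u, p, q} : Finset V) ∉ T.faces := fun h => by
    have := T.six_le_degree_of_link_triangle hp h (T.mem_faces_perm hq) (by omega)
    omega
  obtain ⟨y, hyx, hy⟩ := T.exists_ne_mem_faces (T.mem_faces_perm hp : ({u, p, x} : Finset V) ∈ _)
  obtain ⟨y', hy'x, hy'⟩ := T.exists_ne_mem_faces (T.mem_faces_perm hq : ({u, q, x} : Finset V) ∈ _)
  have hyq : y ≠ q := fun h => no_triangle (h ▸ hy)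
  have hy'p : y' ≠ p := fun h => no_triangle (T.mem_faces_perm (h ▸ hy'))
  obtain ⟨-, -, hxp⟩ := T.ne_of_mem_faces hp
  obtain ⟨-, -, hxq⟩ := T.ne_of_mem_faces hq
  obtain ⟨-, -, hpy⟩ := T.ne_of_mem_faces hy
  obtain ⟨-, -, hqy'⟩ := T.ne_of_mem_faces hy'
  have hN : T.graph.neighborFinset u = {x, p, q, y} := by
    refine T.neighborFinset_eq_of_subset ?_ (by rw [hdeg]; grind)
    simp only [Finset.insert_subset_iff, Finset.singleton_subset_iff,
      SimpleGraph.mem_neighborFinset]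
    exact ⟨(T.adj_of_mem_faces hp).1, (T.adj_of_mem_faces hp).2.1,
      (T.adj_of_mem_faces hq).2.1, (T.adj_of_mem_faces hy).2.1⟩
  have hy'N : y' ∈ T.graph.neighborFinset u :=
    (SimpleGraph.mem_neighborFinset ..).2 (T.adj_of_mem_faces hy').2.1
  have hy'y : y' = y := by
    simp only [hN, Finset.mem_insert, Finset.mem_singleton] at hy'N; tauto
  exact ⟨y, hyx, hN, hy, hy'y ▸ hy'⟩

lemma mem_faces_of_link_four {u x p q z : V} (hdeg : T.graph.degree u = 4)
    (hp : ({u, x, p} : Finset V) ∈ T.faces) (hq : ({u, x, q} : Finset V) ∈ T.faces)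
    (hpq : p ≠ q) (hz : ({u, q, z} : Finset V) ∈ T.faces) (hzx : z ≠ x) :
    ({u, p, z} : Finset V) ∈ T.faces := by
  obtain ⟨y, hyx, -, hpy, hqy⟩ := T.link_four hdeg hp hq hpq
  rcases T.eq_or_eq_of_mem_faces (T.mem_faces_perm hq : ({u, q, x} : Finset V) ∈ _) hqy
    hyx.symm hz with rfl | rfl
  exacts [absurd rfl hzx, hpy]

lemma link_five {u x p q : V} (hdeg : T.graph.degree u = 5)
    (hp : ({u, x, p} : Finset V) ∈ T.faces) (hq : ({u, x, q} : Finset V) ∈ T.faces)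
    (hpq : p ≠ q) :
    ∃ s t, T.graph.neighborFinset u = {x, p, q, s, t} ∧
      ({u, q, s} : Finset V) ∈ T.faces ∧ ({u, s, t} : Finset V) ∈ T.faces ∧
      ({u, t, p} : Finset V) ∈ T.faces ∧ s ≠ x ∧ s ≠ p ∧ t ≠ x ∧ t ≠ q := by
  obtain ⟨s, hsx, hs⟩ := T.exists_ne_mem_faces (T.mem_faces_perm hq : ({u, q, x} : Finset V) ∈ _)
  obtain ⟨-, -, hqs⟩ := T.ne_of_mem_faces hs
  have hsp : s ≠ p := fun h => by
    have := T.six_le_degree_of_link_triangle hp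
      (T.mem_faces_perm (h ▸ hs) : ({u, p, q} : Finset V) ∈ _) (T.mem_faces_perm hq) (by omega)
    omega
  obtain ⟨t, htq, ht⟩ := T.exists_ne_mem_faces (T.mem_faces_perm hs : ({u, s, q} : Finset V) ∈ _)
  obtain ⟨-, -, hst⟩ := T.ne_of_mem_faces ht
  have htx : t ≠ x := fun h => by
    rcases T.eq_or_eq_of_mem_faces hp hq hpq
      (T.mem_faces_perm (h ▸ ht) : ({u, x, s} : Finset V) ∈ _) with h' | h'
    exacts [hsp h', hqs h'.symm]
  have htp : t ≠ p := fun h => by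
    have := T.seven_le_degree_of_link_square hp (T.mem_faces_perm (h ▸ ht))
      (T.mem_faces_perm hs) (T.mem_faces_perm hq) hsx.symm hpq (by omega)
    omega
  obtain ⟨-, -, hxp⟩ := T.ne_of_mem_faces hp
  obtain ⟨-, -, hxq⟩ := T.ne_of_mem_faces hq
  have hN : T.graph.neighborFinset u = {x, p, q, s, t} := by
    refine T.neighborFinset_eq_of_subset ?_ (by rw [hdeg]; grind)
    simp only [Finset.insert_subset_iff, Finset.singleton_subset_iff,
      SimpleGraph.mem_neighborFinset]
    exact ⟨(T.adj_of_mem_faces hp).1, (T.adj_of_mem_faces hp).2.1,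
      (T.adj_of_mem_faces hq).2.1, (T.adj_of_mem_faces hs).2.1, (T.adj_of_mem_faces ht).2.1⟩
  obtain ⟨r, hrs, hr⟩ := T.exists_ne_mem_faces (T.mem_faces_perm ht : ({u, t, s} : Finset V) ∈ _)
  obtain ⟨-, -, htr⟩ := T.ne_of_mem_faces hr
  have hrN : r ∈ T.graph.neighborFinset u :=
    (SimpleGraph.mem_neighborFinset ..).2 (T.adj_of_mem_faces hr).2.1
  have hrp : r = p := by
    simp only [hN, Finset.mem_insert, Finset.mem_singleton] at hrN
    rcases hrN with h | h | h | h | h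
    · rcases T.eq_or_eq_of_mem_faces hp hq hpq
        (T.mem_faces_perm (h ▸ hr) : ({u, x, t} : Finset V) ∈ _) with h' | h'
      exacts [absurd h' htp, absurd h' htq]
    · exact h
    · rcases T.eq_or_eq_of_mem_faces (T.mem_faces_perm hq) hs hsx.symm
        (T.mem_faces_perm (h ▸ hr) : ({u, q, t} : Finset V) ∈ _) with h' | h'
      exacts [absurd h' htx, absurd h'.symm hst]
    · exact absurd h hrs
    · exact absurd h.symm htr
  exact ⟨s, t, hN, hs, ht, hrp ▸ hr, hsx, hsp, htx, htq⟩

lemma isSepTri_of_enclosed {x y z : V} (hxy : T.graph.Adj x y) (hxz : T.graph.Adj x z)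
    (hyz : T.graph.Adj y z) {A : Finset V} (hA : A.Nonempty) (hdisj : Disjoint A {x, y, z})
    (hclosed : ∀ a ∈ A, T.graph.neighborFinset a ⊆ A ∪ {x, y, z})
    (hcard : A.card + 3 < Fintype.card V) : T.IsSepTri {x, y, z} := by
  obtain ⟨b, -, hb⟩ := Finset.exists_mem_notMem_of_card_lt_card
    (show (A ∪ {x, y, z}).card < (Finset.univ : Finset V).card by
      have := Finset.card_union_le A {x, y, z}
      have := Finset.card_le_three (a := x) (b := y) (c := z)
      rw [Finset.card_univ]; omega)
  refine ⟨Finset.card_eq_three.2 ⟨x, y, z, hxy.ne, hxz.ne, hyz.ne, rfl⟩, ?_,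
    A, (↑(A ∪ {x, y, z}))ᶜ, hA, ⟨b, by simpa using hb⟩, ?_, ?_, ?_⟩
  · simp only [Finset.mem_insert, Finset.mem_singleton]
    rintro u (rfl | rfl | rfl) v (rfl | rfl | rfl) huv
    all_goals first | exact absurd rfl huv | assumption | exact SimpleGraph.Adj.symm ‹_›
  · ext v
    have hv : v ∈ A → v ∉ ({x, y, z} : Finset V) := fun h => Finset.disjoint_left.1 hdisj h
    simp only [Set.mem_union, Finset.mem_coe, Set.mem_compl_iff, Finset.mem_union,
      Set.mem_ofPred_eq] at hv ⊢
    tauto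
  · ext v
    simp only [Set.mem_inter_iff, Finset.mem_coe, Set.mem_compl_iff, Finset.mem_union,
      Set.mem_empty_iff_false, iff_false]
    tauto
  · intro a ha b hb hab
    exact hb (Finset.mem_coe.2 (hclosed a ha ((SimpleGraph.mem_neighborFinset ..).2 hab)))

lemma four_le_degree (hn : 5 ≤ Fintype.card V) (h4 : T.FourConnected) (x : V) :
    4 ≤ T.graph.degree x := by
  obtain ⟨f, hf, hxf⟩ := T.covers x
  obtain ⟨y, hyf, hyx⟩ := Finset.exists_mem_ne (by rw [T.card_eq f hf]; norm_num) x
  obtain ⟨z, rfl⟩ := T.exists_eq_of_mem_faces hf hxf hyf hyx.symm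
  have h3 := T.card_add_three_le_degree (u := x) (S := ∅) (by simp)
    (by simpa using (T.graph.degree_pos_iff_exists_adj x).2 ⟨y, (T.adj_of_mem_faces hf).1⟩)
  by_contra! hlt
  have hdeg : T.graph.degree x = 3 := by omega
  obtain ⟨r, hrz, hr⟩ := T.exists_ne_mem_faces hf
  obtain ⟨r', hr'y, hr'⟩ := T.exists_ne_mem_faces (T.mem_faces_perm hf : ({x, z, y} : Finset V) ∈ _)
  obtain ⟨-, -, hyz⟩ := T.ne_of_mem_faces hf
  obtain ⟨-, hxr, hyr⟩ := T.ne_of_mem_faces hr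
  obtain ⟨-, -, hzr'⟩ := T.ne_of_mem_faces hr'
  have hN : T.graph.neighborFinset x = {y, z, r} := by
    refine T.neighborFinset_eq_of_subset ?_ (by rw [hdeg]; grind)
    simp only [Finset.insert_subset_iff, Finset.singleton_subset_iff,
      SimpleGraph.mem_neighborFinset]
    exact ⟨(T.adj_of_mem_faces hf).1, (T.adj_of_mem_faces hf).2.1, (T.adj_of_mem_faces hr).2.1⟩
  have hr'N : r' ∈ T.graph.neighborFinset x :=
    (SimpleGraph.mem_neighborFinset ..).2 (T.adj_of_mem_faces hr').2.1
  have hr'r : r' = r := by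
    simp only [hN, Finset.mem_insert, Finset.mem_singleton] at hr'N; tauto
  subst hr'r
  refine h4 _ (T.isSepTri_of_enclosed (T.adj_of_mem_faces hf).2.2 (T.adj_of_mem_faces hr).2.2
    (T.adj_of_mem_faces hr').2.2 (A := {x}) (by simp) ?_ ?_ (by rw [Finset.card_singleton]; omega))
  · simp [hxr, (T.ne_of_mem_faces hf).1, (T.ne_of_mem_faces hf).2.1]
  · simpa only [Finset.mem_singleton, forall_eq, hN] using Finset.subset_union_right

lemma isSepTri_of_enclosed_edge {u y v p q : V} (hvp : T.graph.Adj v p) (hvq : T.graph.Adj v q)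
    (hpq : T.graph.Adj p q) (hNu : T.graph.neighborFinset u = {v, p, q, y})
    (hNy : T.graph.neighborFinset y = {u, p, q, v}) (hn : 5 < Fintype.card V) :
    T.IsSepTri {v, p, q} := by
  have hu : ∀ z ∈ ({v, p, q} : Finset V), z ≠ u := fun z hz hzu => by
    have : z ∈ T.graph.neighborFinset u := by
      rw [hNu]; simp only [Finset.mem_insert, Finset.mem_singleton] at hz ⊢; tauto
    exact (SimpleGraph.mem_neighborFinset ..).1 this |>.ne hzu.symm
  have hy : ∀ z ∈ ({v, p, q} : Finset V), z ≠ y := fun z hz hzy => by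
    have : z ∈ T.graph.neighborFinset y := by
      rw [hNy]; simp only [Finset.mem_insert, Finset.mem_singleton] at hz ⊢; tauto
    exact (SimpleGraph.mem_neighborFinset ..).1 this |>.ne hzy.symm
  refine T.isSepTri_of_enclosed hvp hvq hpq (A := {u, y}) (by simp) ?_ ?_
    (by have := Finset.card_le_two (a := u) (b := y); omega)
  · rw [Finset.disjoint_right]
    intro z hz
    simp [hu z hz, hy z hz]
  · intro a ha
    simp only [Finset.mem_insert, Finset.mem_singleton] at ha
    rcases ha with rfl | rfl
    · simp [hNu, Finset.insert_subset_iff]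
    · simp [hNy, Finset.insert_subset_iff]

lemma isSepTri_of_link_five {u v p q s t : V} (hn : 7 ≤ Fintype.card V)
    (hN : T.graph.neighborFinset u = {v, p, q, s, t}) (hp : ({v, u, p} : Finset V) ∈ T.faces)
    (hq : ({v, u, q} : Finset V) ∈ T.faces) (hqs : ({u, q, s} : Finset V) ∈ T.faces)
    (hst : ({u, s, t} : Finset V) ∈ T.faces) (htp : ({u, t, p} : Finset V) ∈ T.faces)
    (hpq : T.graph.Adj p q) (hvs : T.graph.Adj v s) (hvt : T.graph.Adj v t)
    (hqt : T.graph.Adj q t) (hsp : T.graph.Adj s p)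
    (hs : T.graph.degree s ≤ 5) (ht : T.graph.degree t ≤ 5) : T.IsSepTri {v, p, q} := by
  obtain ⟨hvu, hvp, hup⟩ := T.ne_of_mem_faces hp
  obtain ⟨-, hvq, huq⟩ := T.ne_of_mem_faces hq
  obtain ⟨-, hus, hqs'⟩ := T.ne_of_mem_faces hqs
  obtain ⟨-, hut, -⟩ := T.ne_of_mem_faces hst
  obtain ⟨-, -, htp'⟩ := T.ne_of_mem_faces htp
  have hpq' := hpq.ne
  have hvs' := hvs.ne
  have hvt' := hvt.ne
  have hqt' := hqt.ne
  have hsp' := hsp.ne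
  have hNs : T.graph.neighborFinset s = {v, u, q, t, p} := by
    refine T.neighborFinset_eq_of_subset ?_ (hs.trans (by grind))
    simp only [Finset.insert_subset_iff, Finset.singleton_subset_iff,
      SimpleGraph.mem_neighborFinset]
    exact ⟨hvs.symm, (T.adj_of_mem_faces hqs).2.1.symm, (T.adj_of_mem_faces hqs).2.2.symm,
      (T.adj_of_mem_faces hst).2.2, hsp⟩
  have hNt : T.graph.neighborFinset t = {v, u, p, s, q} := by
    refine T.neighborFinset_eq_of_subset ?_ (ht.trans (by grind))
    simp only [Finset.insert_subset_iff, Finset.singleton_subset_iff,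
      SimpleGraph.mem_neighborFinset]
    exact ⟨hvt.symm, (T.adj_of_mem_faces htp).1.symm, (T.adj_of_mem_faces htp).2.2,
      (T.adj_of_mem_faces hst).2.2.symm, hqt.symm⟩
  refine T.isSepTri_of_enclosed (T.adj_of_mem_faces hp).2.1 (T.adj_of_mem_faces hq).2.1 hpq
    (A := {u, s, t}) (by simp) ?_ ?_
    (by have := Finset.card_le_three (a := u) (b := s) (c := t); omega)
  · simp [hvu, hup.symm, huq.symm, hvs', hsp'.symm, hvt', htp'.symm, hqs', hqt']
  · intro a ha
    simp only [Finset.mem_insert, Finset.mem_singleton] at ha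
    rcases ha with rfl | rfl | rfl
    · simp [hN, Finset.insert_subset_iff]
    · simp [hNs, Finset.insert_subset_iff]
    · simp [hNt, Finset.insert_subset_iff]

structure IsFlippable (a b c d : V) : Prop where
  face_c : ({a, b, c} : Finset V) ∈ T.faces
  face_d : ({a, b, d} : Finset V) ∈ T.faces
  ne : c ≠ d
  not_adj : ¬ T.graph.Adj c d

def flipFaces (a b c d : V) : Finset (Finset V) :=
  insert {a, c, d} (insert {b, c, d} (T.faces \ {{a, b, c}, {a, b, d}}))

namespace IsFlippable

variable {T} {a b c d : V}

lemma distinct (h : T.IsFlippable a b c d) :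
    a ≠ b ∧ a ≠ c ∧ a ≠ d ∧ b ≠ c ∧ b ≠ d :=
  have ⟨hab, hac, hbc⟩ := T.ne_of_mem_faces h.face_c
  have ⟨_, had, hbd⟩ := T.ne_of_mem_faces h.face_d
  ⟨hab, hac, had, hbc, hbd⟩

lemma exists_mem_flipFaces (h : T.IsFlippable a b c d) {f : Finset V} (hf : f ∈ T.faces)
    {x y : V} (hx : x ∈ f) (hy : y ∈ f) (hxy : ({x, y} : Finset V) ≠ {a, b}) :
    ∃ g ∈ T.flipFaces a b c d, x ∈ g ∧ y ∈ g := by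
  by_cases hR : f = {a, b, c} ∨ f = {a, b, d}
  · have hacd : {a, c, d} ∈ T.flipFaces a b c d := Finset.mem_insert_self _ _
    have hbcd : {b, c, d} ∈ T.flipFaces a b c d :=
      Finset.mem_insert_of_mem (Finset.mem_insert_self _ _)
    have hf : ∀ z ∈ f, z = a ∨ z = b ∨ z = c ∨ z = d := by
      rcases hR with rfl | rfl <;> intro z hz <;>
        simp only [Finset.mem_insert, Finset.mem_singleton] at hz <;> tauto
    rcases hf x hx with rfl | rfl | rfl | rfl <;> rcases hf y hy with rfl | rfl | rfl | rfl
    all_goals first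
      | exact absurd rfl hxy
      | exact absurd (Finset.pair_comm _ _) hxy
      | (refine ⟨_, hacd, ?_, ?_⟩ <;> simp <;> done)
      | (refine ⟨_, hbcd, ?_, ?_⟩ <;> simp)
  · refine ⟨f, Finset.mem_insert_of_mem (Finset.mem_insert_of_mem ?_), hx, hy⟩
    simpa [hf] using hR

lemma card_filter_flipFaces_add (h : T.IsFlippable a b c d) (P : Finset V → Prop)
    [DecidablePred P] :
    ((T.flipFaces a b c d).filter P).card +
        (({{a, b, c}, {a, b, d}} : Finset (Finset V)).filter P).card =
      (T.faces.filter P).card + (({{a, c, d}, {b, c, d}} : Finset (Finset V)).filter P).card := by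
  obtain ⟨hab, hac, had, -, -⟩ := h.distinct
  refine Finset.card_filter_insert_insert_sdiff_add ?_
    (fun hf => h.not_adj (T.adj_of_mem_faces hf).2.2)
    (fun hf => h.not_adj (T.adj_of_mem_faces hf).2.2)
    (ne_of_mem_of_not_mem' (a := a) (by simp) (by simp [hab, hac, had])) P
  simp [Finset.insert_subset_iff, h.face_c, h.face_d]

lemma card_flipFaces (h : T.IsFlippable a b c d) :
    (T.flipFaces a b c d).card = T.faces.card := by
  obtain ⟨hab, hac, had, hbc, -⟩ := h.distinct
  have := h.card_filter_flipFaces_add fun _ => True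
  simp only [Finset.filter_true] at this
  rw [Finset.card_pair
      (ne_of_mem_of_not_mem' (a := c) (by simp) (by simp [hac.symm, hbc.symm, h.ne])),
    Finset.card_pair (ne_of_mem_of_not_mem' (a := a) (by simp) (by simp [hab, hac, had]))] at this
  omega

lemma card_filter_flipFaces_new_edge (h : T.IsFlippable a b c d) :
    ((T.flipFaces a b c d).filter fun f => {c, d} ⊆ f).card = 2 := by
  have hsum := h.card_filter_flipFaces_add fun f => {c, d} ⊆ f
  obtain ⟨hab, hac, had, hbc, hbd⟩ := h.distinct
  have hF : T.faces.filter (fun f => {c, d} ⊆ f) = ∅ := Finset.filter_eq_empty_iff.2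
    fun f hf hsub => h.not_adj ⟨h.ne, f, hf, hsub (by simp), hsub (by simp)⟩
  have hR : ({{a, b, c}, {a, b, d}} : Finset (Finset V)).filter (fun f => {c, d} ⊆ f) = ∅ := by
    simp [Finset.filter_insert, Finset.insert_subset_iff, h.ne, h.ne.symm, hac.symm, hbc.symm,
      had.symm, hbd.symm]
  have hN : ({{a, c, d}, {b, c, d}} : Finset (Finset V)).filter (fun f => {c, d} ⊆ f) =
      {{a, c, d}, {b, c, d}} :=
    Finset.filter_true_of_mem (by simp [Finset.insert_subset_iff])
  rw [hF, hR, hN, Finset.card_pair (ne_of_mem_of_not_mem' (a := a) (by simp)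
    (by simp [hab, hac, had]))] at hsum
  simpa using hsum

lemma not_mem_and_mem_of_mem_flipFaces (h : T.IsFlippable a b c d) {f : Finset V}
    (hf : f ∈ T.flipFaces a b c d) : ¬ (a ∈ f ∧ b ∈ f) := by
  rintro ⟨ha, hb⟩
  obtain ⟨hab, hac, had, hbc, hbd⟩ := h.distinct
  simp only [flipFaces, Finset.mem_insert, Finset.mem_sdiff, Finset.mem_singleton] at hf
  rcases hf with rfl | rfl | ⟨hf, hf'⟩
  · simp [hab.symm, hbc, hbd] at hb
  · simp [hab, hac, had] at ha
  · obtain ⟨z, rfl⟩ := T.exists_eq_of_mem_faces hf ha hb hab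
    rcases T.eq_or_eq_of_mem_faces h.face_c h.face_d h.ne hf with rfl | rfl <;> simp at hf'

lemma exists_mem_faces_of_subset_flipFaces (h : T.IsFlippable a b c d) {e f : Finset V}
    (hf : f ∈ T.flipFaces a b c d) (hef : e ⊆ f) (hcd : ¬ (c ∈ e ∧ d ∈ e)) :
    ∃ g ∈ T.faces, e ⊆ g := by
  by_cases hfold : f ∈ T.faces
  · exact ⟨f, hfold, hef⟩
  have hf' : ∀ z ∈ f, z = a ∨ z = b ∨ z = c ∨ z = d := by
    simp only [flipFaces, Finset.mem_insert, Finset.mem_sdiff, Finset.mem_singleton, hfold,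
      false_and, or_false] at hf
    rcases hf with rfl | rfl <;> intro z hz <;>
      simp only [Finset.mem_insert, Finset.mem_singleton] at hz <;>
      rcases hz with rfl | rfl | rfl <;> simp
  by_cases hc : c ∈ e
  · refine ⟨_, h.face_c, fun z hz => ?_⟩
    have hzd : z ≠ d := fun hzd => hcd ⟨hc, hzd ▸ hz⟩
    simp only [Finset.mem_insert, Finset.mem_singleton]
    rcases hf' z (hef hz) with h' | h' | h' | h'
    exacts [Or.inl h', Or.inr (Or.inl h'), Or.inr (Or.inr h'), absurd h' hzd]
  · refine ⟨_, h.face_d, fun z hz => ?_⟩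
    have hzc : z ≠ c := fun hzc => hc (hzc ▸ hz)
    simp only [Finset.mem_insert, Finset.mem_singleton]
    rcases hf' z (hef hz) with h' | h' | h' | h'
    exacts [Or.inl h', Or.inr (Or.inl h'), absurd h' hzc, Or.inr (Or.inr h')]

lemma card_filter_flipFaces (h : T.IsFlippable a b c d) {e : Finset V} (he : e.card = 2)
    (hex : ∃ f ∈ T.flipFaces a b c d, e ⊆ f) :
    ((T.flipFaces a b c d).filter fun f => e ⊆ f).card = 2 := by
  by_cases hcd : c ∈ e ∧ d ∈ e
  · obtain rfl : e = {c, d} := (Finset.eq_of_subset_of_card_le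
      (by simp [Finset.insert_subset_iff, hcd]) (by rw [he, Finset.card_pair h.ne])).symm
    exact h.card_filter_flipFaces_new_edge
  obtain ⟨f, hf, hef⟩ := hex
  have hab : ¬ (a ∈ e ∧ b ∈ e) := fun hab =>
    h.not_mem_and_mem_of_mem_flipFaces hf ⟨hef hab.1, hef hab.2⟩
  have := h.card_filter_flipFaces_add fun f => e ⊆ f
  have := Finset.card_filter_flip_eq h.distinct.1 h.ne he hab hcd
  have := T.two_faces e he (h.exists_mem_faces_of_subset_flipFaces hf hef hcd)
  omega

lemma covers_flipFaces (h : T.IsFlippable a b c d) (x : V) :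
    ∃ f ∈ T.flipFaces a b c d, x ∈ f := by
  obtain ⟨f, hf, hx⟩ := T.covers x
  have hxx : ({x, x} : Finset V) ≠ {a, b} := fun hxx => by
    simpa [Finset.card_pair h.distinct.1] using congrArg Finset.card hxx
  obtain ⟨g, hg, hxg, -⟩ := h.exists_mem_flipFaces hf hx hx hxx
  exact ⟨g, hg, hxg⟩

lemma face_connected_flipFaces (h : T.IsFlippable a b c d) (A : Finset V) (hA : A.Nonempty)
    (hAU : A ≠ Finset.univ) :
    ∃ f ∈ T.flipFaces a b c d, (∃ x ∈ f, x ∈ A) ∧ ∃ y ∈ f, y ∉ A := by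
  have cross : ∀ f ∈ T.faces, ∀ x ∈ f, ∀ y ∈ f, x ∈ A → y ∉ A →
      ({x, y} : Finset V) ≠ {a, b} →
      ∃ f ∈ T.flipFaces a b c d, (∃ x ∈ f, x ∈ A) ∧ ∃ y ∈ f, y ∉ A :=
    fun f hf x hx y hy hxA hyA hxy =>
      have ⟨g, hg, hxg, hyg⟩ := h.exists_mem_flipFaces hf hx hy hxy
      ⟨g, hg, ⟨x, hxg, hxA⟩, y, hyg, hyA⟩
  obtain ⟨f, hf, ⟨x, hx, hxA⟩, y, hy, hyA⟩ := T.face_connected A hA hAU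
  by_cases hxy : ({x, y} : Finset V) = {a, b}
  · have hab : ∀ z ∈ ({x, y} : Finset V), z ∈ ({a, b, c} : Finset V) := fun z hz => by
      rw [hxy] at hz; simp only [Finset.mem_insert, Finset.mem_singleton] at hz ⊢; tauto
    have hc : c ∉ ({a, b} : Finset V) := by simp [h.distinct.2.1.symm, h.distinct.2.2.2.1.symm]
    by_cases hcA : c ∈ A
    · exact cross _ h.face_c c (by simp) y (hab y (by simp)) hcA hyA
        (ne_of_mem_of_not_mem' (by simp) hc)
    · exact cross _ h.face_c x (hab x (by simp)) c (by simp) hxA hcA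
        (ne_of_mem_of_not_mem' (a := c) (by simp) hc)
  · exact cross f hf x hx y hy hxA hyA hxy

def flip (h : T.IsFlippable a b c d) : Triangulation V where
  faces := T.flipFaces a b c d
  outer := if T.outer = {a, b, c} ∨ T.outer = {a, b, d} then {a, c, d} else T.outer
  outer_mem := by
    split_ifs with ho
    · exact Finset.mem_insert_self _ _
    · exact Finset.mem_insert_of_mem
        (Finset.mem_insert_of_mem (Finset.mem_sdiff.2 ⟨T.outer_mem, by simpa using ho⟩))
  card_eq f hf := by
    simp only [flipFaces, Finset.mem_insert, Finset.mem_sdiff] at hf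
    obtain ⟨-, hac, had, hbc, hbd⟩ := h.distinct
    rcases hf with rfl | rfl | ⟨hf, -⟩
    · exact Finset.card_eq_three.2 ⟨a, c, d, hac, had, h.ne, rfl⟩
    · exact Finset.card_eq_three.2 ⟨b, c, d, hbc, hbd, h.ne, rfl⟩
    · exact T.card_eq f hf
  two_faces _ he hex := h.card_filter_flipFaces he hex
  covers := h.covers_flipFaces
  euler := by rw [h.card_flipFaces, T.euler]
  face_connected := h.face_connected_flipFaces

lemma flipData_flip (h : T.IsFlippable a b c d) : T.FlipData h.flip a b c d :=
  ⟨h.face_c, h.face_d, h.ne, h.not_adj, rfl, fun ho => if_neg (by tauto),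
    fun ho => Or.inl (if_pos ho)⟩

lemma adj_flip (h : T.IsFlippable a b c d) : h.flip.graph.Adj c d :=
  ⟨h.ne, {a, c, d}, Finset.mem_insert_self _ _, by simp, by simp⟩

lemma adj_flip_of_adj (h : T.IsFlippable a b c d) {x y : V} (hxy : T.graph.Adj x y)
    (hne : ({x, y} : Finset V) ≠ {a, b}) : h.flip.graph.Adj x y :=
  have ⟨_, hf, hx, hy⟩ := hxy.2
  have ⟨g, hg, hxg, hyg⟩ := h.exists_mem_flipFaces hf hx hy hne
  ⟨hxy.ne, g, hg, hxg, hyg⟩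

end IsFlippable

def IsRigidExcept (e : Finset V) : Prop :=
  ∀ a b c d, ({a, b} : Finset V) ≠ e → ¬ T.IsFlippable a b c d

variable {T} in
lemma IsRigidExcept.adj {e : Finset V} (hT : T.IsRigidExcept e) {a b c d : V}
    (he : ({a, b} : Finset V) ≠ e) (hc : ({a, b, c} : Finset V) ∈ T.faces)
    (hd : ({a, b, d} : Finset V) ∈ T.faces) (hcd : c ≠ d) : T.graph.Adj c d :=
  by_contra fun h => hT a b c d he ⟨hc, hd, hcd, h⟩

section Rigid

variable {v w : V}

lemma degree_ne_five_of_rigid (hn : 7 ≤ Fintype.card V) (h4 : T.FourConnected)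
    (hnbr : ∀ u, T.graph.Adj v u → T.graph.degree u ≤ 5)
    (hrigid : T.IsRigidExcept {v, w})
    {u : V} (hvu : T.graph.Adj v u) (huw : u ≠ w) : T.graph.degree u ≠ 5 := by
  intro hdeg
  obtain ⟨p, hp⟩ := T.exists_mem_faces_of_adj hvu
  obtain ⟨q, hqp, hq⟩ := T.exists_ne_mem_faces hp
  obtain ⟨s, t, hN, hqs, hst, htp, hsv, hsp, htv, htq⟩ :=
    T.link_five hdeg (T.mem_faces_perm hp) (T.mem_faces_perm hq) hqp.symm
  have hu : u ∉ ({v, w} : Finset V) := by simp [hvu.ne', huw]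
  have rigid_u : ∀ b c d, ({u, b, c} : Finset V) ∈ T.faces →
      ({u, b, d} : Finset V) ∈ T.faces → c ≠ d → T.graph.Adj c d :=
    fun _ _ _ => hrigid.adj (ne_of_mem_of_not_mem' (by simp) hu)
  have hvs : T.graph.Adj v s := rigid_u q v s (T.mem_faces_perm hq) hqs hsv.symm
  have hvt : T.graph.Adj v t := rigid_u p v t (T.mem_faces_perm hp) (T.mem_faces_perm htp) htv.symm
  exact h4 _ (T.isSepTri_of_link_five hn hN hp hq hqs hst htp
    (hrigid.adj (ne_of_mem_of_not_mem' (a := u) (by simp) hu) hp hq hqp.symm) hvs hvt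
    (rigid_u s q t (T.mem_faces_perm hqs) hst htq.symm)
    (rigid_u t s p (T.mem_faces_perm hst) htp hsp) (hnbr s hvs) (hnbr t hvt))

lemma adj_of_rigid (hn : 7 ≤ Fintype.card V) (h4 : T.FourConnected)
    (hnbr : ∀ u, T.graph.Adj v u → T.graph.degree u ≤ 5) (hrigid : T.IsRigidExcept {v, w})
    {u : V} (hvu : T.graph.Adj v u) (huw : u ≠ w) (hdeg : T.graph.degree u = 4) :
    T.graph.Adj u w := by
  obtain ⟨p, hp⟩ := T.exists_mem_faces_of_adj hvu
  obtain ⟨q, hqp, hq⟩ := T.exists_ne_mem_faces hp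
  obtain ⟨y, hyv, hN, hpy, hqy⟩ :=
    T.link_four hdeg (T.mem_faces_perm hp) (T.mem_faces_perm hq) hqp.symm
  suffices hyw : y = w from hyw ▸ (T.adj_of_mem_faces hpy).2.1
  by_contra hyw
  have hu : u ∉ ({v, w} : Finset V) := by simp [hvu.ne', huw]
  have hvy : T.graph.Adj v y :=
    hrigid.adj (ne_of_mem_of_not_mem' (by simp) hu) (T.mem_faces_perm hp) hpy hyv.symm
  have hpq : T.graph.Adj p q :=
    hrigid.adj (ne_of_mem_of_not_mem' (a := u) (by simp) hu) hp hq hqp.symm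
  have hdy : T.graph.degree y ≤ 4 := by
    have := T.degree_ne_five_of_rigid hn h4 hnbr hrigid hvy hyw
    have := hnbr y hvy
    omega
  obtain ⟨hvu', hvp, hup⟩ := T.ne_of_mem_faces hp
  obtain ⟨-, hvq, huq⟩ := T.ne_of_mem_faces hq
  have hNy : T.graph.neighborFinset y = {u, p, q, v} := by
    refine T.neighborFinset_eq_of_subset ?_ (hdy.trans (by grind))
    simp only [Finset.insert_subset_iff, Finset.singleton_subset_iff,
      SimpleGraph.mem_neighborFinset]
    exact ⟨(T.adj_of_mem_faces hpy).2.1.symm, (T.adj_of_mem_faces hpy).2.2.symm,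
      (T.adj_of_mem_faces hqy).2.2.symm, hvy.symm⟩
  exact h4 _ (T.isSepTri_of_enclosed_edge (T.adj_of_mem_faces hp).2.1
    (T.adj_of_mem_faces hq).2.1 hpq hN hNy (by omega))

lemma exists_isFlippable_ne (hn : 7 ≤ Fintype.card V) (h4 : T.FourConnected)
    (hv : 6 ≤ T.graph.degree v) (hnbr : ∀ u, T.graph.Adj v u → T.graph.degree u ≤ 5)
    (hvw : T.graph.Adj v w) :
    ∃ a b c d, ({a, b} : Finset V) ≠ {v, w} ∧ T.IsFlippable a b c d := by
  by_contra! hrigid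
  have hsub : insert v ((T.graph.neighborFinset v).erase w) ⊆ T.graph.neighborFinset w := by
    intro u hu
    simp only [Finset.mem_insert, Finset.mem_erase, SimpleGraph.mem_neighborFinset] at hu ⊢
    rcases hu with rfl | ⟨huw, hvu⟩
    · exact hvw.symm
    have := T.four_le_degree (by omega) h4 u
    have := T.degree_ne_five_of_rigid hn h4 hnbr hrigid hvu huw
    exact (T.adj_of_rigid hn h4 hnbr hrigid hvu huw (by have := hnbr u hvu; omega)).symm
  have := Finset.card_le_card hsub
  rw [Finset.card_insert_of_notMem (by simp), Finset.card_erase_of_mem (by simpa using hvw),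
    SimpleGraph.card_neighborFinset_eq_degree, SimpleGraph.card_neighborFinset_eq_degree] at this
  have := hnbr w hvw
  omega

end Rigid

section AllDegreeFour

variable {v u p q y : V}

lemma not_adj_of_forall_degree_eq_four (hall4 : ∀ x, T.graph.Adj v x → T.graph.degree x = 4)
    (hp : ({v, u, p} : Finset V) ∈ T.faces) (hq : ({v, u, q} : Finset V) ∈ T.faces)
    (hpq : p ≠ q) (hpy : ({u, p, y} : Finset V) ∈ T.faces)
    (hqy : ({u, q, y} : Finset V) ∈ T.faces) : ¬ T.graph.Adj v y := by
  intro hvy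
  obtain ⟨m, -, hNy, hpm, -⟩ := T.link_four (hall4 y hvy)
    (T.mem_faces_perm hpy : ({y, u, p} : Finset V) ∈ _)
    (T.mem_faces_perm hqy : ({y, u, q} : Finset V) ∈ _) hpq
  obtain ⟨hvu, hvp, -⟩ := T.ne_of_mem_faces hp
  obtain ⟨-, hvq, -⟩ := T.ne_of_mem_faces hq
  have hvm : v = m := by
    have hv : v ∈ T.graph.neighborFinset y := (SimpleGraph.mem_neighborFinset ..).2 hvy.symm
    simp only [hNy, Finset.mem_insert, Finset.mem_singleton] at hv
    rcases hv with h | h | h | h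
    exacts [absurd h hvu, absurd h hvp, absurd h hvq, h]
  have hdp := hall4 p (T.adj_of_mem_faces hp).2.1
  have := T.six_le_degree_of_link_triangle (T.mem_faces_perm hp : ({p, u, v} : Finset V) ∈ _)
    (T.mem_faces_perm (hvm ▸ hpm) : ({p, v, y} : Finset V) ∈ _)
    (T.mem_faces_perm hpy : ({p, y, u} : Finset V) ∈ _) (by omega)
  omega

lemma five_le_degree_of_forall_degree_eq_four (hn : 7 ≤ Fintype.card V) (h4 : T.FourConnected)
    (hall4 : ∀ x, T.graph.Adj v x → T.graph.degree x = 4)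
    (hp : ({v, u, p} : Finset V) ∈ T.faces) (hq : ({v, u, q} : Finset V) ∈ T.faces)
    (hpq : p ≠ q) (hNu : T.graph.neighborFinset u = {v, p, q, y})
    (hpy : ({u, p, y} : Finset V) ∈ T.faces) (hqy : ({u, q, y} : Finset V) ∈ T.faces)
    (hyv : y ≠ v) (hvy : ¬ T.graph.Adj v y) : 5 ≤ T.graph.degree y := by
  by_contra! hy
  have hdy : T.graph.degree y = 4 := le_antisymm (by omega) (T.four_le_degree (by omega) h4 y)
  obtain ⟨m, hmu, hNy, hpm, hqm⟩ := T.link_four hdy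
    (T.mem_faces_perm hpy : ({y, u, p} : Finset V) ∈ _)
    (T.mem_faces_perm hqy : ({y, u, q} : Finset V) ∈ _) hpq
  have hvm : ({p, v, m} : Finset V) ∈ T.faces :=
    T.mem_faces_of_link_four (hall4 p (T.adj_of_mem_faces hp).2.1)
      (T.mem_faces_perm hp : ({p, u, v} : Finset V) ∈ _)
      (T.mem_faces_perm hpy : ({p, u, y} : Finset V) ∈ _) hyv.symm
      (T.mem_faces_perm hpm) hmu
  obtain ⟨hvu, hvp, hup⟩ := T.ne_of_mem_faces hp
  obtain ⟨-, hvq, -⟩ := T.ne_of_mem_faces hq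
  obtain ⟨-, huy, -⟩ := T.ne_of_mem_faces hpy
  obtain ⟨hyp, hym, -⟩ := T.ne_of_mem_faces hpm
  obtain ⟨-, -, hqm'⟩ := T.ne_of_mem_faces hqm
  obtain ⟨-, -, hvm'⟩ := T.ne_of_mem_faces hvm
  have hNq : T.graph.neighborFinset q = {u, v, y, m} := by
    refine T.neighborFinset_eq_of_subset ?_
      (by rw [hall4 q (T.adj_of_mem_faces hq).2.1]; grind)
    simp only [Finset.insert_subset_iff, Finset.singleton_subset_iff,
      SimpleGraph.mem_neighborFinset]
    exact ⟨(T.adj_of_mem_faces hq).2.2.symm, (T.adj_of_mem_faces hq).2.1.symm,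
      (T.adj_of_mem_faces hqy).2.2, (T.adj_of_mem_faces hqm).2.2⟩
  refine h4 _ (T.isSepTri_of_enclosed (T.adj_of_mem_faces hp).2.1 (T.adj_of_mem_faces hvm).2.2
    (T.adj_of_mem_faces hpm).2.2 (A := {u, y, q}) (by simp) ?_ ?_
    (by have := Finset.card_le_three (a := u) (b := y) (c := q); omega))
  · simp [hvu, hyv.symm, hvq, hup.symm, hyp.symm, hpq, hmu, hym.symm, hqm'.symm]
  · intro a ha
    simp only [Finset.mem_insert, Finset.mem_singleton] at ha
    rcases ha with rfl | rfl | rfl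
    · simp [hNu, Finset.insert_subset_iff]
    · simp [hNy, Finset.insert_subset_iff]
    · simp [hNq, Finset.insert_subset_iff]

lemma exists_isFlippable_five_le_degree (hn : 7 ≤ Fintype.card V) (h4 : T.FourConnected)
    (hall4 : ∀ x, T.graph.Adj v x → T.graph.degree x = 4) (hvu : T.graph.Adj v u) :
    ∃ a b y, T.IsFlippable a b v y ∧ 5 ≤ T.graph.degree y := by
  obtain ⟨p, hp⟩ := T.exists_mem_faces_of_adj hvu
  obtain ⟨q, hqp, hq⟩ := T.exists_ne_mem_faces hp
  obtain ⟨y, hyv, hN, hpy, hqy⟩ :=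
    T.link_four (hall4 u hvu) (T.mem_faces_perm hp) (T.mem_faces_perm hq) hqp.symm
  have hvy := T.not_adj_of_forall_degree_eq_four hall4 hp hq hqp.symm hpy hqy
  exact ⟨u, p, y, ⟨T.mem_faces_perm hp, hpy, hyv.symm, hvy⟩,
    T.five_le_degree_of_forall_degree_eq_four hn h4 hall4 hp hq hqp.symm hN hpy hqy hyv hvy⟩

end AllDegreeFour

end Triangulation

/-- In a 4-connected triangulation on `n ≥ 13` vertices, every vertex
of degree at least 6 either has a neighbour of degree at least 6, or there is a single
flip after which it is adjacent to a vertex that had degree at least 5 before the flip. -/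
theorem high_degree_vertex_gets_high_degree_neighbour
    {V : Type*} [Fintype V] [DecidableEq V] (T : Triangulation V)
    (hn : 13 ≤ Fintype.card V) (h4 : T.FourConnected)
    (v : V) (hv : 6 ≤ T.graph.degree v) :
    (∃ w : V, T.graph.Adj v w ∧ 6 ≤ T.graph.degree w) ∨
    (∃ (T' : Triangulation V) (w : V), T.IsFlip T' ∧ 5 ≤ T.graph.degree w ∧
      T'.graph.Adj v w) := by
  by_cases h6 : ∃ w, T.graph.Adj v w ∧ 6 ≤ T.graph.degree w
  · exact Or.inl h6
  push Not at h6
  right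
  have hnbr : ∀ u, T.graph.Adj v u → T.graph.degree u ≤ 5 := fun u hu => by
    have := h6 u hu; omega
  by_cases h5 : ∃ w, T.graph.Adj v w ∧ T.graph.degree w = 5
  · obtain ⟨w, hvw, hw⟩ := h5
    obtain ⟨a, b, c, d, hne, hflip⟩ := T.exists_isFlippable_ne (by omega) h4 hv hnbr hvw
    exact ⟨hflip.flip, w, ⟨a, b, c, d, hflip.flipData_flip⟩, hw.ge,
      hflip.adj_flip_of_adj hvw hne.symm⟩
  push Not at h5
  have hall4 : ∀ u, T.graph.Adj v u → T.graph.degree u = 4 := fun u hu => by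
    have := T.four_le_degree (by omega) h4 u
    have := hnbr u hu
    have := h5 u hu
    omega
  obtain ⟨u, hvu⟩ := (T.graph.degree_pos_iff_exists_adj v).1 (by omega)
  obtain ⟨a, b, y, hflip, hy⟩ := T.exists_isFlippable_five_le_degree (by omega) h4 hall4 hvu
  exact ⟨hflip.flip, y, ⟨a, b, v, y, hflip.flipData_flip⟩, hy, hflip.adj_flip⟩
end
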